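/- arXiv:1701.04813 — 2 statements merged into one kernel-verified Lean document; each statement's English description precedes it below -/
import Mathlib

section
/- For every sequence q = q(n) of integers with 2 ≤ q ≤ (2/√e)·n, the probability that a random n×n puzzle with q jig types has at least two non-similar solutions tends to 1 as n → ∞. -/
open Finset Filter

noncomputable section

/-- A piece of the `n × n` puzzle, identified with its cell in the original grid. -/
abbrev Cell (n : ℕ) := Fin n × Fin n

/-- The unit vector in direction `d` (`0` = right, `1` = up, `2` = left, `3` = down). -/
def dirVec (d : ZMod 4) : ℤ × ℤ :=
  if d = 0 then (1, 0) else if d = 1 then (0, 1) else if d = 2 then (-1, 0) else (0, -1)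

/-- The integer coordinates of a cell. -/
def cellZ {n : ℕ} (c : Cell n) : ℤ × ℤ := ((c.1 : ℤ), (c.2 : ℤ))

/-- A carving assigns a jig type (one of `q` possibilities) to each of the four
(cyclically ordered) sides of each of the `n²` pieces. -/
abbrev Carving (n q : ℕ) := Cell n → ZMod 4 → Fin q

/-- A carving is valid if each pair of coincident sides of adjacent pieces of the
original grid receives complementary jig types (`ι` is the complementation involution). -/
def IsValidCarving {n q : ℕ} (ι : Fin q → Fin q) (ω : Carving n q) : Prop :=
  ∀ p p' : Cell n, ∀ d : ZMod 4,
    cellZ p' = cellZ p + dirVec d → ω p' (d + 2) = ι (ω p d)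

open scoped Classical in
/-- The probability of the event `P` for a carving chosen uniformly at random among
all valid carvings. -/
def puzzleProb {n q : ℕ} (ι : Fin q → Fin q) (P : Carving n q → Prop) : ℝ :=
  ((Finset.univ.filter fun ω : Carving n q => IsValidCarving ι ω ∧ P ω).card : ℝ) /
  ((Finset.univ.filter fun ω : Carving n q => IsValidCarving ι ω).card : ℝ)

/-- A complete assembly: a bijective placement of the pieces onto the cells of the
`n × n` grid together with an orientation (`ℤ/4`) for each piece. -/
structure Assembly (n : ℕ) where
  pos : Equiv.Perm (Cell n)
  rot : Cell n → ZMod 4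

/-- The planted assembly keeps every piece in its original position and orientation. -/
def planted (n : ℕ) : Assembly n := ⟨Equiv.refl _, fun _ => 0⟩

/-- A complete assembly is feasible for the carving `ω` if all pairs of abutting sides
carry complementary jig types.  The side of piece `p` facing direction `d` after `p` is
rotated by `A.rot p` quarter turns is its original side `d - A.rot p`. -/
def Assembly.Feasible {n q : ℕ} (ι : Fin q → Fin q) (A : Assembly n) (ω : Carving n q) :
    Prop :=
  ∀ p p' : Cell n, ∀ d : ZMod 4,
    cellZ (A.pos p') = cellZ (A.pos p) + dirVec d →
    ω p' (d + 2 - A.rot p') = ι (ω p (d - A.rot p))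

/-- The carving of the grid obtained by reassembling the pieces according to `A`:
side `d` of the grid cell `c` receives the jig type of the corresponding side of the
piece placed on `c`. -/
def Assembly.carving {n q : ℕ} (A : Assembly n) (ω : Carving n q) : Carving n q :=
  fun c d => ω (A.pos.symm c) (d - A.rot (A.pos.symm c))

/-- Rotation of the grid by 90 degrees. -/
def rotCell {n : ℕ} : Equiv.Perm (Cell n) where
  toFun c := (c.2.rev, c.1)
  invFun c := (c.2, c.1.rev)
  left_inv c := by simp
  right_inv c := by simp

/-- Global rotation of a carving of the grid by 90 degrees. -/
def rotateCarving {n q : ℕ} (ω : Carving n q) : Carving n q :=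
  fun c d => ω (rotCell.symm c) (d - 1)

/-- Two solutions are similar if they differ only by a global rotation of the puzzle,
a permutation of pieces with identical carvings, and rotations of pieces whose carving
is rotation-invariant; equivalently, if they induce the same carving of the grid up to
a global rotation. -/
def PuzzleSimilar {n q : ℕ} (A B : Assembly n) (ω : Carving n q) : Prop :=
  ∃ r : Fin 4, B.carving ω = rotateCarving^[r.val] (A.carving ω)

/-- The planted assembly rotated globally by `r` quarter turns. -/
def rotatedPlanted (n : ℕ) (r : Fin 4) : Assembly n :=
  ⟨rotCell ^ r.val, fun _ => (r.val : ZMod 4)⟩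

/-- The cell `c` belongs to the `k × k` window with lower-left corner `(a, b)`. -/
def inWindow {n : ℕ} (a b k : ℕ) (c : Cell n) : Prop :=
  a ≤ c.1.val ∧ c.1.val < a + k ∧ b ≤ c.2.val ∧ c.2.val < b + k

open scoped Classical in
/-- The number of dual edges of the `k × k` window at `(a, b)` (each dual edge recorded
once, as `(c, c', d)` with `d ∈ {right, up}`) whose abutting jig types, for the carving
induced by the assembly `A`, form the complementary pair `{j, ι j}`. -/
def windowTypeCount {n q : ℕ} (ι : Fin q → Fin q) (A : Assembly n) (ω : Carving n q)
    (a b k : ℕ) (j : Fin q) : ℕ :=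
  (Finset.univ.filter fun x : Cell n × Cell n × Fin 2 =>
    inWindow a b k x.1 ∧ inWindow a b k x.2.1 ∧
    cellZ x.2.1 = cellZ x.1 + dirVec (x.2.2.val : ZMod 4) ∧
    (A.carving ω x.1 (x.2.2.val : ZMod 4) = j ∨
      A.carving ω x.1 (x.2.2.val : ZMod 4) = ι j)).card

open scoped Classical in
/-- The shape multiplicity of the `k × k` window at `(a, b)`: the sum, over unordered
complementary pairs `J = {j, ι j}`, of `⌊(number of dual edges of the window of type J)/2⌋`. -/
def windowSM {n q : ℕ} (ι : Fin q → Fin q) (A : Assembly n) (ω : Carving n q)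
    (a b k : ℕ) : ℕ :=
  ∑ j ∈ Finset.univ.filter (fun j : Fin q => j ≤ ι j),
    windowTypeCount ι A ω a b k j / 2

/-- A feasible complete assembly is `k`-good if every `k × k` window touching the boundary
of the puzzle has shape multiplicity at most `1`, and every other `k × k` window has shape
multiplicity at most `2`. -/
def KGood {n q : ℕ} (ι : Fin q → Fin q) (A : Assembly n) (ω : Carving n q) (k : ℕ) :
    Prop :=
  A.Feasible ι ω ∧
    ∀ a b : ℕ, a + k ≤ n → b + k ≤ n →
      windowSM ι A ω a b k ≤ 2 ∧
      ((a = 0 ∨ b = 0 ∨ a + k = n ∨ b + k = n) → windowSM ι A ω a b k ≤ 1)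

/-- A partial assembly: an injective placement of a subset of the pieces into the square
grid `ℤ²`, together with an orientation for each placed piece. -/
structure PartialAssembly (n : ℕ) where
  pieces : Finset (Cell n)
  pos : Cell n → ℤ × ℤ
  rot : Cell n → ZMod 4
  pos_inj : ∀ p ∈ pieces, ∀ p' ∈ pieces, pos p = pos p' → p = p'

/-- A partial assembly is feasible for `ω` if all pairs of abutting sides carry
complementary jig types. -/
def PartialAssembly.Feasible {n q : ℕ} (ι : Fin q → Fin q) (A : PartialAssembly n)
    (ω : Carving n q) : Prop :=
  ∀ p ∈ A.pieces, ∀ p' ∈ A.pieces, ∀ d : ZMod 4,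
    A.pos p' = A.pos p + dirVec d →
    ω p' (d + 2 - A.rot p') = ι (ω p (d - A.rot p))

open scoped Classical in
/-- The edges of the contour graph `C(A)`: the dual edges of `A` (each recorded once, as
`(p, p', d)` with `d ∈ {right, up}`, `p'` being placed in direction `d` from `p`) whose two
abutting piece sides are not coincident in the planted assembly. -/
def contourEdges {n : ℕ} (A : PartialAssembly n) : Finset (Cell n × Cell n × Fin 2) :=
  Finset.univ.filter fun x =>
    x.1 ∈ A.pieces ∧ x.2.1 ∈ A.pieces ∧
    A.pos x.2.1 = A.pos x.1 + dirVec (x.2.2.val : ZMod 4) ∧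
    ¬ (A.rot x.2.1 = A.rot x.1 ∧
        cellZ x.2.1 = cellZ x.1 + dirVec ((x.2.2.val : ZMod 4) - A.rot x.1))

/-- The piece sides lying across the edges of the contour graph of `A`. -/
def crossingSides {n : ℕ} (A : PartialAssembly n) : Set (Cell n × ZMod 4) :=
  {ps | ∃ x ∈ contourEdges A,
    ps = (x.1, (x.2.2.val : ZMod 4) - A.rot x.1) ∨
    ps = (x.2.1, (x.2.2.val : ZMod 4) + 2 - A.rot x.2.1)}

/-- Two piece sides are coincident in the planted assembly. -/
def CoincidentPlanted {n : ℕ} (ps ps' : Cell n × ZMod 4) : Prop :=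
  cellZ ps'.1 = cellZ ps.1 + dirVec ps.2 ∧ ps'.2 = ps.2 + 2

open scoped Classical in
/-- The shape multiplicity `sm(C(A), ω)` of the contour graph of `A` with respect to `ω`:
the sum, over unordered complementary pairs `J = {j, ι j}`, of
`⌊(number of contour edges of type J)/2⌋`. -/
def contourSM {n q : ℕ} (ι : Fin q → Fin q) (A : PartialAssembly n) (ω : Carving n q) :
    ℕ :=
  ∑ j ∈ Finset.univ.filter (fun j : Fin q => j ≤ ι j),
    ((contourEdges A).filter fun x =>
      ω x.1 ((x.2.2.val : ZMod 4) - A.rot x.1) = j ∨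
      ω x.1 ((x.2.2.val : ZMod 4) - A.rot x.1) = ι j).card / 2

end

/-!
If a valid carving `ω` has no two non-similar solutions, then every valid carving with the same
multiset of pieces up to rotation is the carving induced by a solution for `ω`, hence one of the
four global rotations of `ω`. So such carvings number at most `4 · C(K + n² - 1, n²)`, where by
Burnside's lemma the number `K` of pieces up to rotation satisfies `4K ≤ q⁴ + 3q²`, while there are
at least `q^(2n² + 2n)` valid carvings. With `C(K + m - 1, m) ≤ (e(K + m)/m)^m` for `m = n²` and
`e q² ≤ 4n²`, the ratio is at most `4 (4/5)^n + 4 e⁵⁰ 4⁻ⁿ`: if `16 q² ≤ m` then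
`e(K + m)/m ≤ (4/5) q²`, and otherwise `e(K + m)/m ≤ q² (1 + 50/m)`.
-/

instance {M : Type*} [Fintype M] : Fintype Mᵈᵃᵃ := Fintype.ofEquiv M DomAddAct.mk

/-- Pieces up to rotation: `s : (ZMod 4)ᵈᵃᵃ` turns the piece `f` into `fun d => f (s + d)`. -/
abbrev PieceClass (q : ℕ) := AddAction.orbitRel.Quotient (ZMod 4)ᵈᵃᵃ (ZMod 4 → Fin q)

section PieceClass

open AddAction

variable {q : ℕ}

lemma card_fixedBy_two_le [Fintype (fixedBy (ZMod 4 → Fin q) (DomAddAct.mk (2 : ZMod 4)))] :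
    Fintype.card (fixedBy (ZMod 4 → Fin q) (DomAddAct.mk (2 : ZMod 4))) ≤ q ^ 2 := by
  have hinj : Function.Injective fun f : fixedBy (ZMod 4 → Fin q) (DomAddAct.mk (2 : ZMod 4)) =>
      ((f : ZMod 4 → Fin q) 0, (f : ZMod 4 → Fin q) 1) := by
    rintro ⟨f, hf⟩ ⟨g, hg⟩ hfg
    have hf2 : ∀ d, f (2 + d) = f d := fun d => congrFun hf d
    have hg2 : ∀ d, g (2 + d) = g d := fun d => congrFun hg d
    simp only [Prod.mk.injEq] at hfg
    ext d : 2
    fin_cases d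
    · exact hfg.1
    · exact hfg.2
    · change f (2 + 0) = g (2 + 0)
      rw [hf2, hg2, hfg.1]
    · change f (2 + 1) = g (2 + 1)
      rw [hf2, hg2, hfg.2]
  simpa [sq] using Fintype.card_le_of_injective _ hinj

lemma card_fixedBy_le {g : (ZMod 4)ᵈᵃᵃ} (hg : g ≠ 0) [Fintype (fixedBy (ZMod 4 → Fin q) g)] :
    Fintype.card (fixedBy (ZMod 4 → Fin q) g) ≤ q ^ 2 := by
  classical
  have hsub : fixedBy (ZMod 4 → Fin q) g ⊆
      fixedBy (ZMod 4 → Fin q) (DomAddAct.mk (2 : ZMod 4)) := by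
    obtain ⟨s, rfl⟩ := DomAddAct.mk.surjective g
    fin_cases s
    · exact absurd DomAddAct.mk_zero hg
    · exact fun f hf => fixedBy_add _ _ _ ⟨hf, hf⟩
    · exact subset_rfl
    · exact fun f hf => fixedBy_add _ _ _ ⟨hf, hf⟩
  exact (Set.card_le_card hsub).trans card_fixedBy_two_le

theorem four_mul_card_pieceClass_le : 4 * Nat.card (PieceClass q) ≤ q ^ 4 + 3 * q ^ 2 := by
  classical
  have burnside := sum_card_fixedBy_eq_card_orbits_mul_card_addGroup (ZMod 4)ᵈᵃᵃ (ZMod 4 → Fin q)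
  rw [Fintype.sum_eq_add_sum_compl 0] at burnside
  have h0 : Fintype.card (fixedBy (ZMod 4 → Fin q) (0 : (ZMod 4)ᵈᵃᵃ)) = q ^ 4 := by
    simp [Fintype.card_subtype, fixedBy_zero_eq_univ]
  have h4 : Fintype.card (ZMod 4)ᵈᵃᵃ = 4 := by simp [Fintype.card_congr DomAddAct.mk.symm]
  have hrest : ∑ g ∈ ({0}ᶜ : Finset (ZMod 4)ᵈᵃᵃ), Fintype.card (fixedBy (ZMod 4 → Fin q) g) ≤
      3 * q ^ 2 := by
    refine (Finset.sum_le_card_nsmul _ _ _ fun g hg => card_fixedBy_le (by simpa using hg)).trans ?_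
    simp [Finset.card_compl, h4]
  rw [h4] at burnside
  simp only [Fintype.card_eq_nat_card] at burnside h0 hrest
  change 4 * Nat.card (Quotient _) ≤ _
  omega

end PieceClass

lemma exists_perm_apply_eq_of_map_univ_val_eq {α β : Type*} [Fintype α]
    {f g : α → β} (h : univ.val.map f = univ.val.map g) :
    ∃ σ : Equiv.Perm α, ∀ a, g (σ a) = f a := by
  classical
  have hfiber : ∀ (u : α → β) b, Fintype.card {a // u a = b} = (univ.val.map u).count b := by
    intro u b
    rw [Fintype.card_subtype, Multiset.count_map, Finset.card_def, Finset.filter_val]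
    simp only [eq_comm]
  have e : ∀ b, {a // f a = b} ≃ {a // g a = b} := fun b =>
    Fintype.equivOfCardEq (by rw [hfiber, hfiber, h])
  exact ⟨Equiv.ofFiberEquiv e, Equiv.ofFiberEquiv_map e⟩

section Assembly

variable {n q : ℕ}

lemma Assembly.feasible_iff (ι : Fin q → Fin q) (A : Assembly n) (ω : Carving n q) :
    A.Feasible ι ω ↔ IsValidCarving ι (A.carving ω) := by
  constructor
  · intro h c c' d hcc
    simpa [Assembly.carving] using h (A.pos.symm c) (A.pos.symm c') d (by simpa using hcc)
  · intro h p p' d hpp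
    simpa [Assembly.carving] using h (A.pos p) (A.pos p') d hpp

lemma planted_carving (ω : Carving n q) : (planted n).carving ω = ω := by
  funext c d
  simp [planted, Assembly.carving]

def HasNonsimilarSolutions (ι : Fin q → Fin q) (ω : Carving n q) : Prop :=
  ∃ A B : Assembly n, A.Feasible ι ω ∧ B.Feasible ι ω ∧ ¬ PuzzleSimilar A B ω

def pieceBag (ω : Carving n q) : Sym (PieceClass q) (n * n) :=
  ⟨univ.val.map fun p => Quotient.mk'' (ω p), by simp⟩

lemma exists_carving_eq_of_pieceBag_eq {ω ω' : Carving n q} (h : pieceBag ω = pieceBag ω') :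
    ∃ A : Assembly n, A.carving ω = ω' := by
  classical
  obtain ⟨σ, hσ⟩ := exists_perm_apply_eq_of_map_univ_val_eq (congrArg Subtype.val h).symm
  choose s hs using fun p => Quotient.exact' (hσ p)
  refine ⟨⟨σ.symm, fun p => DomAddAct.mk.symm (s (σ.symm p))⟩, ?_⟩
  funext c d
  simp only [Assembly.carving, Equiv.symm_symm, Equiv.symm_apply_apply, ← hs c,
    DomAddAct.vadd_apply, vadd_eq_add, add_sub_cancel]

lemma exists_eq_rotate_of_pieceBag_eq {ι : Fin q → Fin q} {ω ω' : Carving n q}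
    (hω : IsValidCarving ι ω) (hunique : ¬ HasNonsimilarSolutions ι ω)
    (hω' : IsValidCarving ι ω') (h : pieceBag ω = pieceBag ω') :
    ∃ r : Fin 4, ω' = rotateCarving^[r.val] ω := by
  obtain ⟨B, hB⟩ := exists_carving_eq_of_pieceBag_eq h
  have hplanted : (planted n).Feasible ι ω := by rwa [Assembly.feasible_iff, planted_carving]
  have hfeas : B.Feasible ι ω := by rwa [Assembly.feasible_iff, hB]
  by_contra hrot
  refine hunique ⟨planted n, B, hplanted, hfeas, fun ⟨r, hr⟩ => hrot ⟨r, ?_⟩⟩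
  rwa [planted_carving, hB] at hr

theorem card_not_hasNonsimilarSolutions_le (ι : Fin q → Fin q) :
    Nat.card {ω : Carving n q // IsValidCarving ι ω ∧ ¬ HasNonsimilarSolutions ι ω} ≤
      4 * (Nat.card (PieceClass q) + n * n - 1).choose (n * n) := by
  classical
  rw [Nat.card_eq_fintype_card, Fintype.card_subtype]
  set S := univ.filter fun ω : Carving n q => IsValidCarving ι ω ∧ ¬ HasNonsimilarSolutions ι ω
  have hfiber : ∀ b ∈ (univ : Finset (Sym (PieceClass q) (n * n))),
      (S.filter fun ω => pieceBag ω = b).card ≤ 4 := by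
    intro b _
    rcases (S.filter fun ω => pieceBag ω = b).eq_empty_or_nonempty with hempty | ⟨ω, hω⟩
    · simp [hempty]
    simp only [S, mem_filter, mem_univ, true_and] at hω
    calc (S.filter fun ω => pieceBag ω = b).card
        ≤ (univ.image fun r : Fin 4 => rotateCarving^[r.val] ω).card := by
          refine card_le_card fun ω' hω' => ?_
          simp only [S, mem_filter, mem_univ, true_and] at hω'
          obtain ⟨r, hr⟩ := exists_eq_rotate_of_pieceBag_eq hω.1.1 hω.1.2 hω'.1.1
            (hω.2.trans hω'.2.symm)
          exact mem_image.mpr ⟨r, mem_univ _, hr.symm⟩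
      _ ≤ 4 := card_image_le.trans (by simp)
  refine (card_le_mul_card_image_of_maps_to (fun ω _ => mem_univ (pieceBag ω)) 4 hfiber).trans ?_
  rw [card_univ, Sym.card_sym_eq_choose, Nat.card_eq_fintype_card]

end Assembly

section ValidCarving

variable {n q : ℕ}

lemma cellZ_eq_add_dirVec_zero_iff {p p' : Cell n} :
    cellZ p' = cellZ p + dirVec 0 ↔ p'.1.val = p.1.val + 1 ∧ p'.2 = p.2 := by
  simp +decide [cellZ, dirVec, Prod.ext_iff, Fin.ext_iff]
  omega

lemma cellZ_eq_add_dirVec_one_iff {p p' : Cell n} :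
    cellZ p' = cellZ p + dirVec 1 ↔ p'.1 = p.1 ∧ p'.2.val = p.2.val + 1 := by
  simp +decide [cellZ, dirVec, Prod.ext_iff, Fin.ext_iff]
  omega

lemma isValidCarving_of_right_of_up {ι : Fin q → Fin q} (hι : Function.Involutive ι)
    {ω : Carving n q} (hright : ∀ p p', cellZ p' = cellZ p + dirVec 0 → ω p' 2 = ι (ω p 0))
    (hup : ∀ p p', cellZ p' = cellZ p + dirVec 1 → ω p' 3 = ι (ω p 1)) :
    IsValidCarving ι ω := by
  intro p p' d hd
  obtain rfl | rfl | rfl | rfl : d = 0 ∨ d = 1 ∨ d = 2 ∨ d = 3 := by clear hd; revert d; decide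
  · exact hright p p' hd
  · exact hup p p' hd
  · have : cellZ p = cellZ p' + dirVec 0 := by
      rw [hd, add_assoc]; simp +decide [dirVec]
    rw [hright p' p this, hι]; rfl
  · have : cellZ p = cellZ p' + dirVec 1 := by
      rw [hd, add_assoc]; simp +decide [dirVec]
    rw [hup p' p this, hι]; rfl

/-- The carving with prescribed right and upper sides `f`, prescribed left sides `g 0` of the
left column and bottom sides `g 1` of the bottom row, and all other sides forced by validity. -/
def extendCarving (ι : Fin q → Fin q) (f : Cell n → Fin 2 → Fin q) (g : Fin 2 → Fin n → Fin q) :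
    Carving n q := fun p d =>
  if d = 0 then f p 0
  else if d = 1 then f p 1
  else if d = 2 then
    if h : p.1.val = 0 then g 0 p.2 else ι (f (⟨p.1.val - 1, by omega⟩, p.2) 0)
  else
    if h : p.2.val = 0 then g 1 p.1 else ι (f (p.1, ⟨p.2.val - 1, by omega⟩) 1)

lemma isValidCarving_extendCarving {ι : Fin q → Fin q} (hι : Function.Involutive ι)
    (f : Cell n → Fin 2 → Fin q) (g : Fin 2 → Fin n → Fin q) :
    IsValidCarving ι (extendCarving ι f g) := by
  refine isValidCarving_of_right_of_up hι (fun p p' h => ?_) (fun p p' h => ?_)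
  · obtain ⟨h1, h2⟩ := cellZ_eq_add_dirVec_zero_iff.mp h
    simp +decide [extendCarving, h1, h2]
  · obtain ⟨h1, h2⟩ := cellZ_eq_add_dirVec_one_iff.mp h
    simp +decide [extendCarving, h1, h2]

lemma extendCarving_injective (ι : Fin q → Fin q) :
    Function.Injective fun fg : (Cell n → Fin 2 → Fin q) × (Fin 2 → Fin n → Fin q) =>
      extendCarving ι fg.1 fg.2 := by
  rintro ⟨f, g⟩ ⟨f', g'⟩ h
  have hside := fun p d => congrFun (congrFun h p) d
  simp only at hside
  ext p i : 3
  · fin_cases i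
    · simpa +decide [extendCarving] using hside p 0
    · simpa +decide [extendCarving] using hside p 1
  · fin_cases p
    · simpa +decide [extendCarving] using hside (⟨0, i.pos⟩, i) 2
    · simpa +decide [extendCarving] using hside (i, ⟨0, i.pos⟩) 3

theorem pow_le_card_isValidCarving {ι : Fin q → Fin q} (hι : Function.Involutive ι) :
    q ^ (n * n * 2 + n * 2) ≤ Nat.card {ω : Carving n q // IsValidCarving ι ω} := by
  calc q ^ (n * n * 2 + n * 2)
      = Nat.card ((Cell n → Fin 2 → Fin q) × (Fin 2 → Fin n → Fin q)) := by
        simp only [Nat.card_eq_fintype_card, Fintype.card_prod, Fintype.card_fun, Fintype.card_fin]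
        ring
    _ ≤ _ := Nat.card_le_card_of_injective
        (fun fg => ⟨extendCarving ι fg.1 fg.2, isValidCarving_extendCarving hι fg.1 fg.2⟩)
        fun _ _ h => extendCarving_injective ι (congrArg Subtype.val h)

lemma exists_isValidCarving {ι : Fin q → Fin q} (hι : Function.Involutive ι) (hq : 0 < q) :
    ∃ ω : Carving n q, IsValidCarving ι ω :=
  ⟨_, isValidCarving_extendCarving hι (fun _ _ => ⟨0, hq⟩) (fun _ _ => ⟨0, hq⟩)⟩

end ValidCarving

section Asymptotics

open Real Nat

lemma choose_add_sub_one_le (K m : ℕ) :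
    ((K + m - 1).choose m : ℝ) ≤ ((K + m) * exp 1 / m) ^ m := by
  rcases Nat.eq_zero_or_pos m with rfl | hm
  · simp
  have hfact : (m : ℝ) ^ m / m ! ≤ exp 1 ^ m := by
    rw [← exp_nat_mul, mul_one]
    exact pow_div_factorial_le_exp _ (Nat.cast_nonneg m) m
  calc ((K + m - 1).choose m : ℝ) ≤ ((K + m - 1 : ℕ) : ℝ) ^ m / m ! := choose_le_pow_div _ _
    _ ≤ ((K : ℝ) + m) ^ m / m ! := by gcongr; exact_mod_cast Nat.sub_le _ _
    _ = ((K + m) / m) ^ m * ((m : ℝ) ^ m / m !) := by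
        rw [div_pow, div_mul_div_cancel₀ (by positivity)]
    _ ≤ ((K + m) / m) ^ m * exp 1 ^ m := by gcongr
    _ = ((K + m) * exp 1 / m) ^ m := by rw [← mul_pow, div_mul_eq_mul_div]

lemma add_mul_exp_one_div_le_of_sixteen_mul_le {K m Q : ℝ} (hQ : 4 ≤ Q) (hQm : 16 * Q ≤ m)
    (hK : 4 * K ≤ Q ^ 2 + 3 * Q) : (K + m) * exp 1 / m ≤ 4 / 5 * Q := by
  have he := exp_one_lt_d9
  rw [div_le_iff₀ (by linarith)]
  have hsum : K + m ≤ 71 / 256 * (Q * m) := by nlinarith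
  nlinarith [exp_pos 1]

lemma add_mul_exp_one_div_le_of_le_sixteen_mul {K m Q : ℝ} (hm : 0 < m)
    (hQm : exp 1 * Q ≤ 4 * m) (hmQ : m ≤ 16 * Q) (hK : 4 * K ≤ Q ^ 2 + 3 * Q) :
    (K + m) * exp 1 / m ≤ Q * (1 + 50 / m) := by
  have he := exp_one_lt_d9
  have hQ : 0 ≤ Q := by linarith
  have hrhs : Q * (1 + 50 / m) * m = Q * m + 50 * Q := by field_simp
  rw [div_le_iff₀ hm, hrhs]
  nlinarith [exp_pos 1]

lemma add_mul_exp_one_div_pow_le_of_sixteen_mul_le {Q : ℝ} {K m n : ℕ} (hQ : 4 ≤ Q)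
    (hnm : n ≤ m) (hQm : 16 * Q ≤ m) (hK : 4 * (K : ℝ) ≤ Q ^ 2 + 3 * Q) :
    ((K + m) * exp 1 / m) ^ m ≤ (4 / 5) ^ n * (Q ^ m * Q ^ n) := by
  have h45 : (4 / 5 : ℝ) ^ m ≤ (4 / 5) ^ n := pow_le_pow_of_le_one (by norm_num) (by norm_num) hnm
  have hQn : 1 ≤ Q ^ n := one_le_pow₀ (by linarith)
  calc ((K + m) * exp 1 / m) ^ m ≤ (4 / 5 * Q) ^ m := by
        gcongr; exact add_mul_exp_one_div_le_of_sixteen_mul_le hQ hQm hK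
    _ = (4 / 5) ^ m * Q ^ m * 1 := by rw [mul_pow, mul_one]
    _ ≤ (4 / 5) ^ n * Q ^ m * Q ^ n := by gcongr
    _ = (4 / 5) ^ n * (Q ^ m * Q ^ n) := by ring

lemma add_mul_exp_one_div_pow_le_of_le_sixteen_mul {Q : ℝ} {K m n : ℕ} (hQ : 4 ≤ Q)
    (hm : 0 < m) (hQm : exp 1 * Q ≤ 4 * m) (hmQ : m ≤ 16 * Q) (hK : 4 * (K : ℝ) ≤ Q ^ 2 + 3 * Q) :
    ((K + m) * exp 1 / m) ^ m ≤ exp 50 * (1 / 4) ^ n * (Q ^ m * Q ^ n) := by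
  have hm' : (0 : ℝ) < m := by exact_mod_cast hm
  have h14 : 1 ≤ (1 / 4) ^ n * Q ^ n := by rw [← mul_pow]; exact one_le_pow₀ (by linarith)
  calc ((K + m) * exp 1 / m) ^ m ≤ (Q * (1 + 50 / m)) ^ m := by
        gcongr; exact add_mul_exp_one_div_le_of_le_sixteen_mul hm' hQm hmQ hK
    _ = (1 + 50 / m) ^ m * Q ^ m * 1 := by rw [mul_pow, mul_one, mul_comm]
    _ ≤ exp 50 * Q ^ m * ((1 / 4) ^ n * Q ^ n) := by
        gcongr
        simpa [neg_div] using one_sub_div_pow_le_exp_neg (n := m) (t := -50) (by linarith)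
    _ = exp 50 * (1 / 4) ^ n * (Q ^ m * Q ^ n) := by ring

lemma exp_one_mul_sq_le_of_le_two_div_sqrt {x y : ℝ} (hx : 0 ≤ x)
    (h : x ≤ 2 / √(exp 1) * y) : exp 1 * x ^ 2 ≤ 4 * y ^ 2 := by
  have hsqrt := Real.sqrt_pos.mpr (exp_pos 1)
  have h' : x * √(exp 1) ≤ 2 * y := by
    rwa [div_mul_eq_mul_div, le_div_iff₀ hsqrt] at h
  calc exp 1 * x ^ 2 = (x * √(exp 1)) ^ 2 := by
        rw [mul_pow, Real.sq_sqrt (exp_pos 1).le, mul_comm]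
    _ ≤ (2 * y) ^ 2 := by gcongr
    _ = 4 * y ^ 2 := by ring

theorem four_mul_choose_le {n q K : ℕ} (hq : 2 ≤ q) (hqn : exp 1 * q ^ 2 ≤ 4 * n ^ 2)
    (hK : 4 * K ≤ q ^ 4 + 3 * q ^ 2) :
    4 * ((K + n * n - 1).choose (n * n) : ℝ) ≤
      (4 * (4 / 5) ^ n + 4 * exp 50 * (1 / 4) ^ n) * (q : ℝ) ^ (n * n * 2 + n * 2) := by
  set m := n * n with hm
  set Q : ℝ := (q : ℝ) ^ 2 with hQ
  have hQ4 : 4 ≤ Q := by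
    have : (2 : ℝ) ≤ q := by exact_mod_cast hq
    rw [hQ]; nlinarith
  have hKQ : 4 * (K : ℝ) ≤ Q ^ 2 + 3 * Q := by rw [hQ, ← pow_mul]; exact_mod_cast hK
  have hQm : exp 1 * Q ≤ 4 * m := by rw [hm]; push_cast; linarith
  have hpow : (q : ℝ) ^ (m * 2 + n * 2) = Q ^ m * Q ^ n := by
    rw [hQ, ← pow_mul, ← pow_mul, ← pow_add]; ring_nf
  have hbound : ((K + m) * exp 1 / m) ^ m ≤
      ((4 / 5) ^ n + exp 50 * (1 / 4) ^ n) * (Q ^ m * Q ^ n) := by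
    have h45 : 0 ≤ (4 / 5 : ℝ) ^ n * (Q ^ m * Q ^ n) := by positivity
    have h14 : 0 ≤ exp 50 * (1 / 4 : ℝ) ^ n * (Q ^ m * Q ^ n) := by positivity
    rcases le_or_gt (16 * Q) m with hsmall | hlarge
    · linarith [add_mul_exp_one_div_pow_le_of_sixteen_mul_le hQ4 (Nat.le_mul_self n) hsmall hKQ]
    · have hm0 : 0 < m := by exact_mod_cast (show (0 : ℝ) < m by nlinarith [exp_pos 1])
      linarith [add_mul_exp_one_div_pow_le_of_le_sixteen_mul (n := n) hQ4 hm0 hQm hlarge.le hKQ]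
  calc 4 * ((K + m - 1).choose m : ℝ) ≤ 4 * ((K + m) * exp 1 / m) ^ m := by
        gcongr; exact choose_add_sub_one_le K m
    _ ≤ _ := by rw [hpow]; linarith

end Asymptotics

section Probability

variable {n q : ℕ}

lemma puzzleProb_nonneg (ι : Fin q → Fin q) (P : Carving n q → Prop) : 0 ≤ puzzleProb ι P := by
  unfold puzzleProb; positivity

open scoped Classical in
lemma puzzleProb_add_puzzleProb_not (ι : Fin q → Fin q) (P : Carving n q → Prop)
    (hvalid : ∃ ω : Carving n q, IsValidCarving ι ω) :
    puzzleProb ι P + puzzleProb ι (fun ω => ¬ P ω) = 1 := by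
  obtain ⟨ω, hω⟩ := hvalid
  have hpos : 0 < (univ.filter fun ω : Carving n q => IsValidCarving ι ω).card :=
    card_pos.mpr ⟨ω, by simpa using hω⟩
  unfold puzzleProb
  rw [← add_div, div_eq_one_iff_eq (by exact_mod_cast hpos.ne'), ← Nat.cast_add,
    ← filter_filter, ← filter_filter, card_filter_add_card_filter_not]

lemma puzzleProb_eq_card_div (ι : Fin q → Fin q) (P : Carving n q → Prop) :
    puzzleProb ι P = (Nat.card {ω // IsValidCarving ι ω ∧ P ω} : ℝ) /
      Nat.card {ω : Carving n q // IsValidCarving ι ω} := by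
  unfold puzzleProb
  congr 2 <;> exact (Nat.subtype_card _ fun ω => by simp).symm

theorem puzzleProb_not_hasNonsimilarSolutions_le {ι : Fin q → Fin q} (hι : Function.Involutive ι)
    (hq : 0 < q) :
    puzzleProb ι (fun ω : Carving n q => ¬ HasNonsimilarSolutions ι ω) ≤
      4 * ((Nat.card (PieceClass q) + n * n - 1).choose (n * n) : ℝ) /
        (q : ℝ) ^ (n * n * 2 + n * 2) := by
  have hvalid := pow_le_card_isValidCarving (n := n) hι
  rw [puzzleProb_eq_card_div, div_le_div_iff₀ (by exact_mod_cast (pow_pos hq _).trans_le hvalid)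
    (by positivity)]
  gcongr
  · exact_mod_cast card_not_hasNonsimilarSolutions_le ι
  · exact_mod_cast hvalid

end Probability

/-- For every sequence `q = q(n)` of integers with
`2 ≤ q ≤ (2/√e)·n` (and any choice of complementation involutions), the probability
that a random `n × n` puzzle with `q` jig types has at least two non-similar solutions
tends to `1` as `n → ∞`. -/
theorem statement_0 (q : ℕ → ℕ) (ι : ∀ n, Fin (q n) → Fin (q n))
    (hι : ∀ n, ι n ∘ ι n = id)
    (hq : ∀ᶠ n in atTop, 2 ≤ q n ∧ (q n : ℝ) ≤ 2 / Real.sqrt (Real.exp 1) * n) :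
    Tendsto (fun n =>
        puzzleProb (ι n) fun ω : Carving n (q n) =>
          ∃ A B : Assembly n,
            A.Feasible (ι n) ω ∧ B.Feasible (ι n) ω ∧ ¬ PuzzleSimilar A B ω)
      atTop (nhds 1) := by
  have hinv : ∀ n, Function.Involutive (ι n) := fun n => congrFun (hι n)
  have hbound : ∀ᶠ n in atTop,
      puzzleProb (ι n) (fun ω : Carving n (q n) => ¬ HasNonsimilarSolutions (ι n) ω) ≤
        4 * (4 / 5) ^ n + 4 * Real.exp 50 * (1 / 4) ^ n := by
    filter_upwards [hq] with n ⟨h2, hle⟩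
    refine (puzzleProb_not_hasNonsimilarSolutions_le (hinv n) (by omega)).trans ?_
    rw [div_le_iff₀ (by positivity)]
    exact four_mul_choose_le h2 (exp_one_mul_sq_le_of_le_two_div_sqrt (by positivity) hle)
      four_mul_card_pieceClass_le
  have hlim : Tendsto (fun n : ℕ => 4 * (4 / 5 : ℝ) ^ n + 4 * Real.exp 50 * (1 / 4) ^ n)
      atTop (nhds 0) := by
    have h45 := tendsto_pow_atTop_nhds_zero_of_lt_one (r := (4 / 5 : ℝ)) (by norm_num) (by norm_num)
    have h14 := tendsto_pow_atTop_nhds_zero_of_lt_one (r := (1 / 4 : ℝ)) (by norm_num) (by norm_num)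
    simpa using (h45.const_mul 4).add (h14.const_mul (4 * Real.exp 50))
  have hnot := squeeze_zero' (Eventually.of_forall fun n => puzzleProb_nonneg _ _) hbound hlim
  refine Tendsto.congr' ?_ (by simpa using hnot.const_sub 1)
  filter_upwards [hq] with n hn
  exact (eq_sub_of_add_eq (puzzleProb_add_puzzleProb_not _ (HasNonsimilarSolutions (ι n))
    (exists_isValidCarving (hinv n) (by omega)))).symm
end

section
/- Fix a partial assembly A of an n×n puzzle with q jig types and let E denote the number of edges of its contour graph C(A). If no two of the piece-sides lying across edges of C(A) are coincident in the planted assembly, then the probability (over the uniformly random carving ω) that A is feasible equals q^{−E}. -/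
open Finset Filter

/-!
Of each pair of sides that coincide in the planted grid, call the one facing left or down
*determined*: validity forces its jig type to be the complement of its partner's, so valid
carvings correspond bijectively to arbitrary assignments of types to the `F` remaining (free)
sides, and there are `q ^ F` of them. For a valid carving, feasibility of `A` only has content
at the `E` contour edges, and each contour edge asks that the free type at the representative
of its first crossing side be a fixed function of the free type at the representative of its
second one. As no two crossing sides coincide in the planted grid, the `E` left-hand
representatives are distinct and none of them appears on a right-hand side, so the constrained
values are forced by free ones and `q ^ (F - E)` valid carvings make `A` feasible.
-/

section ConstrainedFunctions

variable {α β γ : Type*}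

def determinedFunEquiv (D : α → Prop) [DecidablePred D] (r : α → α) (g : α → β → β)
    (hr : ∀ s, D s → ¬ D (r s)) :
    {f : α → β // ∀ s, D s → f s = g s (f (r s))} ≃ ({s // ¬ D s} → β) where
  toFun f s := f.1 s
  invFun h := ⟨fun s => if hs : D s then g s (h ⟨r s, hr s hs⟩) else h ⟨s, hs⟩,
    fun s hs => by simp [hs, hr s hs]⟩
  left_inv f := by
    ext s
    by_cases hs : D s
    · simp [hs, f.2 s hs]
    · simp [hs]
  right_inv h := by
    ext s
    simp [s.2]

theorem card_constrained_mul_pow [Finite α] [Finite β] (T : Finset γ) (a b : γ → α)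
    (g : γ → β → β) (ha : Set.InjOn a T) (hab : ∀ x ∈ T, ∀ y ∈ T, a x ≠ b y) :
    Nat.card {f : α → β // ∀ x ∈ T, f (a x) = g x (f (b x))} * Nat.card β ^ T.card =
      Nat.card β ^ Nat.card α := by
  classical
  cases nonempty_fintype α
  cases nonempty_fintype β
  simp only [Nat.card_eq_fintype_card]
  rcases isEmpty_or_nonempty γ with hγ | hγ
  · simp [Finset.eq_empty_of_isEmpty T, Fintype.card_congr (Equiv.subtypeUnivEquiv _)]
  set ainv : α → γ := Function.invFunOn a T
  have hainv : ∀ s ∈ T.image a, ainv s ∈ T ∧ a (ainv s) = s := fun s hs =>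
    Function.invFunOn_pos (by simpa using hs)
  have hconstr : ∀ f : α → β, (∀ x ∈ T, f (a x) = g x (f (b x))) ↔
      ∀ s, s ∈ T.image a → f s = g (ainv s) (f (b (ainv s))) := by
    refine fun f => ⟨fun hf s hs => ?_, fun hf x hx => ?_⟩
    · conv_lhs => rw [← (hainv s hs).2]
      exact hf _ (hainv s hs).1
    · have hax : ainv (a x) = x := ha.leftInvOn_invFunOn hx
      simpa [hax] using hf (a x) (Finset.mem_image_of_mem a hx)
  have hb : ∀ s, s ∈ T.image a → b (ainv s) ∉ T.image a := by
    intro s hs hbs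
    obtain ⟨y, hy, hyb⟩ := Finset.mem_image.1 hbs
    exact hab y hy _ (hainv s hs).1 hyb
  have hT : T.card ≤ Fintype.card α :=
    (Finset.card_image_of_injOn ha).symm.trans_le (Finset.card_le_univ _)
  rw [Fintype.card_congr ((Equiv.subtypeEquivRight hconstr).trans
      (determinedFunEquiv _ _ _ hb)), Fintype.card_fun, ← pow_add, Fintype.card_subtype_compl,
    Fintype.card_coe, Finset.card_image_of_injOn ha, Nat.sub_add_cancel hT]

end ConstrainedFunctions

noncomputable section

abbrev Side (n : ℕ) := Cell n × ZMod 4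

lemma cellZ_injective {n : ℕ} : Function.Injective (cellZ (n := n)) := by
  rintro ⟨a, b⟩ ⟨c, d⟩ h
  simp only [cellZ, Prod.mk.injEq, Int.natCast_inj] at h
  exact Prod.ext (Fin.ext (by exact_mod_cast h.1)) (Fin.ext (by exact_mod_cast h.2))

lemma dirVec_add_two (d : ZMod 4) : dirVec (d + 2) = -dirVec d := by revert d; decide

lemma fin_two_cast_injective : Function.Injective fun e : Fin 2 => (e.val : ZMod 4) := by
  decide

lemma fin_two_cast_ne_add_two (e e' : Fin 2) : (e.val : ZMod 4) ≠ e'.val + 2 := by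
  revert e e'; decide

namespace CoincidentPlanted

variable {n : ℕ} {s t u : Side n}

lemma symm (h : CoincidentPlanted s t) : CoincidentPlanted t s := by
  refine ⟨?_, ?_⟩
  · rw [h.2, dirVec_add_two, h.1, add_neg_cancel_right]
  · rw [h.2, add_assoc, show (2 + 2 : ZMod 4) = 0 from rfl, add_zero]

lemma right_unique (ht : CoincidentPlanted s t) (hu : CoincidentPlanted s u) : t = u :=
  Prod.ext (cellZ_injective (ht.1.trans hu.1.symm)) (ht.2.trans hu.2.symm)

lemma left_unique (hs : CoincidentPlanted s u) (ht : CoincidentPlanted t u) : s = t :=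
  hs.symm.right_unique ht.symm

end CoincidentPlanted

lemma IsValidCarving.apply_of_coincident {n q : ℕ} {ι : Fin q → Fin q} {ω : Carving n q}
    (hω : IsValidCarving ι ω) {s t : Side n} (h : CoincidentPlanted s t) :
    ω t.1 t.2 = ι (ω s.1 s.2) := by
  rw [h.2]
  exact hω _ _ _ h.1

namespace Side

variable {n q : ℕ} {s t : Side n}

def IsDetermined (s : Side n) : Prop :=
  (s.2 = 2 ∨ s.2 = 3) ∧ ∃ t, CoincidentPlanted s t

open Classical in
def partner (s : Side n) : Side n :=
  if h : ∃ t, CoincidentPlanted s t then h.choose else s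

lemma partner_eq (h : CoincidentPlanted s t) : partner s = t := by
  have hex : ∃ t, CoincidentPlanted s t := ⟨t, h⟩
  rw [partner, dif_pos hex]
  exact hex.choose_spec.right_unique h

lemma coincident_partner (h : IsDetermined s) : CoincidentPlanted s (partner s) := by
  obtain ⟨t, ht⟩ := h.2
  rwa [partner_eq ht]

lemma not_isDetermined_partner (h : IsDetermined s) : ¬ IsDetermined (partner s) := by
  rintro ⟨hback, -⟩
  rw [(coincident_partner h).2] at hback
  rcases h.1 with hs | hs <;> rw [hs] at hback <;> revert hback <;> decide

abbrev Free (n : ℕ) := {s : Side n // ¬ IsDetermined s}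

open Classical in
def freeRep (s : Side n) : Free n :=
  if h : IsDetermined s then ⟨partner s, not_isDetermined_partner h⟩ else ⟨s, h⟩

open Classical in
def twist (ι : Fin q → Fin q) (s : Side n) : Fin q → Fin q :=
  if IsDetermined s then ι else id

lemma twist_involutive {ι : Fin q → Fin q} (hι : Function.Involutive ι) (s : Side n) :
    Function.Involutive (twist ι s) := by
  unfold twist
  split_ifs
  exacts [hι, fun _ => rfl]

lemma eq_or_coincident_of_freeRep_eq (h : freeRep s = freeRep t) :
    s = t ∨ CoincidentPlanted s t ∨ CoincidentPlanted t s := by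
  have h' := congrArg Subtype.val h
  unfold freeRep at h'
  by_cases hs : IsDetermined s <;> by_cases ht : IsDetermined t <;>
    simp only [hs, ht, dif_pos, dif_neg, not_false_eq_true] at h'
  · exact Or.inl ((coincident_partner hs).left_unique (h' ▸ coincident_partner ht))
  · exact Or.inr (Or.inl (h' ▸ coincident_partner hs))
  · exact Or.inr (Or.inr (h' ▸ coincident_partner ht))
  · exact Or.inl h'

end Side

variable {n q : ℕ} {ι : Fin q → Fin q}

theorem isValidCarving_iff (hι : Function.Involutive ι)
    (ω : Carving n q) :
    IsValidCarving ι ω ↔ ∀ s : Side n, s.IsDetermined →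
      Function.uncurry ω s = ι (Function.uncurry ω (Side.partner s)) := by
  refine ⟨fun hω s hs => hω.apply_of_coincident (Side.coincident_partner hs).symm,
    fun h p p' d hpp' => ?_⟩
  have hcoin : CoincidentPlanted (p, d) (p', d + 2) := ⟨hpp', rfl⟩
  have back_or : ∀ d : ZMod 4, (d = 2 ∨ d = 3) ∨ (d + 2 = 2 ∨ d + 2 = 3) := by decide
  rcases back_or d with hd | hd
  · have := h (p, d) ⟨hd, _, hcoin⟩
    rw [Side.partner_eq hcoin] at this
    exact hι.eq_iff.1 this.symm
  · have := h (p', d + 2) ⟨hd, _, hcoin.symm⟩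
    rwa [Side.partner_eq hcoin.symm] at this

open Classical in
def validCarvingEquiv (hι : Function.Involutive ι) :
    {ω : Carving n q // IsValidCarving ι ω} ≃ (Side.Free n → Fin q) :=
  ((Equiv.curry _ _ _).symm.subtypeEquiv fun ω => isValidCarving_iff hι ω).trans
    (determinedFunEquiv _ Side.partner (fun _ => ι) fun _ => Side.not_isDetermined_partner)

lemma IsValidCarving.apply_eq_twist (hι : Function.Involutive ι) {ω : Carving n q}
    (hω : IsValidCarving ι ω) (s : Side n) :
    ω s.1 s.2 = Side.twist ι s (ω (Side.freeRep s).1.1 (Side.freeRep s).1.2) := by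
  unfold Side.twist Side.freeRep
  split_ifs with hs
  · exact (isValidCarving_iff hι ω).1 hω s hs
  · rfl

lemma card_validCarving (hι : Function.Involutive ι) :
    Nat.card {ω : Carving n q // IsValidCarving ι ω} = q ^ Nat.card (Side.Free n) := by
  rw [Nat.card_congr (validCarvingEquiv hι), Nat.card_fun, Nat.card_eq_fintype_card (α := Fin q),
    Fintype.card_fin]

namespace PartialAssembly

variable (A : PartialAssembly n)

def srcSide (x : Cell n × Cell n × Fin 2) : Side n :=
  (x.1, (x.2.2.val : ZMod 4) - A.rot x.1)

def tgtSide (x : Cell n × Cell n × Fin 2) : Side n :=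
  (x.2.1, (x.2.2.val : ZMod 4) + 2 - A.rot x.2.1)

lemma mem_contourEdges {x : Cell n × Cell n × Fin 2} :
    x ∈ contourEdges A ↔ x.1 ∈ A.pieces ∧ x.2.1 ∈ A.pieces ∧
      A.pos x.2.1 = A.pos x.1 + dirVec (x.2.2.val : ZMod 4) ∧
      ¬ (A.rot x.2.1 = A.rot x.1 ∧
        cellZ x.2.1 = cellZ x.1 + dirVec ((x.2.2.val : ZMod 4) - A.rot x.1)) := by
  simp [contourEdges]

theorem feasible_iff_forall_fin_two (hι : Function.Involutive ι) (ω : Carving n q) :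
    A.Feasible ι ω ↔ ∀ p ∈ A.pieces, ∀ p' ∈ A.pieces, ∀ e : Fin 2,
      A.pos p' = A.pos p + dirVec (e.val : ZMod 4) →
      ω p' ((e.val : ZMod 4) + 2 - A.rot p') = ι (ω p ((e.val : ZMod 4) - A.rot p)) := by
  refine ⟨fun h p hp p' hp' e => h p hp p' hp' _, fun h p hp p' hp' d hd => ?_⟩
  have fin_two_or_add_two : ∀ d : ZMod 4, ∃ e : Fin 2, d = e.val ∨ d = e.val + 2 := by decide
  obtain ⟨e, rfl | rfl⟩ := fin_two_or_add_two d
  · exact h p hp p' hp' e hd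
  · have := h p' hp' p hp e (by rw [hd, dirVec_add_two, neg_add_cancel_right])
    rw [add_assoc (e.val : ZMod 4) 2 2, show (2 + 2 : ZMod 4) = 0 from rfl, add_zero, this, hι]

theorem feasible_iff_contourEdges (hι : Function.Involutive ι) {ω : Carving n q}
    (hω : IsValidCarving ι ω) :
    A.Feasible ι ω ↔ ∀ x ∈ contourEdges A,
      ω (A.tgtSide x).1 (A.tgtSide x).2 = ι (ω (A.srcSide x).1 (A.srcSide x).2) := by
  rw [feasible_iff_forall_fin_two A hι]
  constructor
  · rintro h ⟨p, p', e⟩ hx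
    rw [mem_contourEdges] at hx
    exact h p hx.1 p' hx.2.1 e hx.2.2.1
  · intro h p hp p' hp' e hpos
    by_cases hco : A.rot p' = A.rot p ∧
        cellZ p' = cellZ p + dirVec ((e.val : ZMod 4) - A.rot p)
    · rw [hco.1, add_sub_right_comm]
      exact hω _ _ _ hco.2
    · exact h (p, p', e) ((mem_contourEdges A).2 ⟨hp, hp', hpos, hco⟩)

lemma srcSide_injOn : Set.InjOn A.srcSide (contourEdges A) := by
  rintro ⟨p, p', e⟩ hx ⟨r, r', f⟩ hy h
  simp only [Finset.mem_coe, mem_contourEdges] at hx hy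
  simp only [srcSide, Prod.mk.injEq] at h
  obtain ⟨rfl, h⟩ := h
  obtain rfl := fin_two_cast_injective (sub_left_inj.1 h)
  obtain rfl := A.pos_inj _ hx.2.1 _ hy.2.1 (hx.2.2.1.trans hy.2.2.1.symm)
  rfl

lemma srcSide_ne_tgtSide (x y : Cell n × Cell n × Fin 2) : A.srcSide x ≠ A.tgtSide y := by
  intro h
  simp only [srcSide, tgtSide, Prod.mk.injEq] at h
  obtain ⟨h1, h2⟩ := h
  rw [h1, sub_left_inj] at h2
  exact fin_two_cast_ne_add_two _ _ h2

lemma freeRep_injOn_crossingSides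
    (hcross : ∀ ps ∈ crossingSides A, ∀ ps' ∈ crossingSides A,
      ¬ CoincidentPlanted ps ps') :
    Set.InjOn Side.freeRep (crossingSides A) := by
  intro s hs t ht h
  rcases Side.eq_or_coincident_of_freeRep_eq h with h | h | h
  · exact h
  · exact absurd h (hcross s hs t ht)
  · exact absurd h (hcross t ht s hs)

theorem card_feasible_mul_pow (hι : Function.Involutive ι)
    (hcross : ∀ ps ∈ crossingSides A, ∀ ps' ∈ crossingSides A,
      ¬ CoincidentPlanted ps ps') :
    Nat.card {ω : Carving n q // IsValidCarving ι ω ∧ A.Feasible ι ω} *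
      q ^ (contourEdges A).card = q ^ Nat.card (Side.Free n) := by
  set a := fun x => Side.freeRep (A.srcSide x)
  set b := fun x => Side.freeRep (A.tgtSide x)
  set g := fun x => Side.twist ι (A.srcSide x) ∘ ι ∘ Side.twist ι (A.tgtSide x)
  have hfeas (ω : {ω : Carving n q // IsValidCarving ι ω}) : A.Feasible ι ω ↔
      ∀ x ∈ contourEdges A,
        validCarvingEquiv hι ω (a x) = g x (validCarvingEquiv hι ω (b x)) := by
    rw [feasible_iff_contourEdges A hι ω.2]
    refine forall₂_congr fun x _ => ?_
    rw [ω.2.apply_eq_twist hι, ω.2.apply_eq_twist hι (A.srcSide x), eq_comm, hι.eq_iff,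
      (Side.twist_involutive hι _).eq_iff]
    rfl
  have hinj := A.freeRep_injOn_crossingSides hcross
  have ha : Set.InjOn a (contourEdges A) := fun x hx y hy h =>
    A.srcSide_injOn hx hy (hinj ⟨x, hx, Or.inl rfl⟩ ⟨y, hy, Or.inl rfl⟩ h)
  have hab : ∀ x ∈ contourEdges A, ∀ y ∈ contourEdges A, a x ≠ b y := fun x hx y hy h =>
    A.srcSide_ne_tgtSide x y (hinj ⟨x, hx, Or.inl rfl⟩ ⟨y, hy, Or.inr rfl⟩ h)
  rw [← Nat.card_congr ((Equiv.subtypeSubtypeEquivSubtypeInter _ _).symm.trans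
      ((validCarvingEquiv hι).subtypeEquiv
        (q := fun f => ∀ x ∈ contourEdges A, f (a x) = g x (f (b x))) hfeas)).symm]
  simpa only [Nat.card_eq_fintype_card (α := Fin q), Fintype.card_fin] using
    card_constrained_mul_pow (contourEdges A) a b g ha hab

end PartialAssembly

end

theorem statement_9_general (n q : ℕ) (hq : 2 ≤ q)
    (ι : Fin q → Fin q) (hι : ι ∘ ι = id)
    (A : PartialAssembly n)
    (hcross : ∀ ps ∈ crossingSides A, ∀ ps' ∈ crossingSides A,
      ¬ CoincidentPlanted ps ps') :
    puzzleProb ι (fun ω : Carving n q => A.Feasible ι ω) =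
      (q : ℝ) ^ (-((contourEdges A).card : ℤ)) := by
  classical
  have hι' : Function.Involutive ι := congrFun hι
  have hcount := A.card_feasible_mul_pow hι' hcross
  have hfeasible : Nat.card {ω : Carving n q // IsValidCarving ι ω ∧ A.Feasible ι ω} ≠ 0 :=
    fun h => pow_ne_zero _ (by omega : q ≠ 0) (by rw [← hcount, h, zero_mul])
  rw [puzzleProb, ← Fintype.card_subtype, ← Fintype.card_subtype, ← Nat.card_eq_fintype_card,
    ← Nat.card_eq_fintype_card, card_validCarving hι', ← hcount,
    Nat.cast_mul, div_mul_cancel_left₀ (Nat.cast_ne_zero.2 hfeasible), zpow_neg, zpow_natCast,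
    Nat.cast_pow]

/-- Fix a partial assembly `A` of an `n × n` puzzle with `q` jig types and
let `E` be the number of edges of its contour graph `C(A)`.  If no two of the piece sides
lying across edges of `C(A)` are coincident in the planted assembly, then the probability
(over the uniformly random carving) that `A` is feasible equals `q^{−E}`. -/
theorem statement_9 (n q : ℕ) (hn : 1 ≤ n) (hq : 2 ≤ q)
    (ι : Fin q → Fin q) (hι : ι ∘ ι = id)
    (A : PartialAssembly n)
    (hcross : ∀ ps ∈ crossingSides A, ∀ ps' ∈ crossingSides A,
      ¬ CoincidentPlanted ps ps') :
    puzzleProb ι (fun ω : Carving n q => A.Feasible ι ω) =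
      (q : ℝ) ^ (-((contourEdges A).card : ℤ)) :=
  statement_9_general n q hq ι hι A hcross
end
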